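/- arXiv:2210.00583 — 3 statements merged into one kernel-verified Lean document; each statement's English description precedes it below -/
import Mathlib

section
/- The change in ensemble disagreement after one gradient step satisfies, exactly to first order in μ: DisAg(s+1) - DisAg(s) = μ(C' - C'') + O(μ²), where C'' = (2/Q)Σ_i Δ(i,i)·Δ(i,t) and C' = (2/Q²)(Σ_i Δ(i,i))·(Σ_j Δ(j,t)). -/
open Matrix

/-- Exact one-step change in ensemble disagreement:
`DisAg(s+1) - DisAg(s) = μ(C' - C'') + μ²·R`, where
`C'' = (2/Q)∑ᵢ Δ(i,i)·Δ(i,t)`, `C' = (2/Q²)(∑ᵢ Δ(i,i))·(∑ⱼ Δ(j,t))`, and `R`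
is an explicit second-order remainder. -/
theorem disagreement_first_order_change (d N Q : ℕ) (hQ : 0 < Q) (μ : ℝ)
    (W : Fin Q → Matrix (Fin 1) (Fin d) ℝ)
    (Δ : Fin Q → Matrix (Fin 1) (Fin d) ℝ)   -- training gradients Δ(i,i)
    (Xt : Matrix (Fin d) (Fin N) ℝ) (yt : Matrix (Fin 1) (Fin N) ℝ)
    (e enew : Fin Q → Matrix (Fin 1) (Fin N) ℝ)
    (Δt : Fin Q → Matrix (Fin 1) (Fin d) ℝ)
    (he : ∀ i, e i = W i * Xt - yt)
    (hΔt : ∀ i, Δt i = e i * Xtᵀ)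
    (henew : ∀ i, enew i = (W i - μ • Δ i) * Xt - yt)
    (DisAg DisAgNew C' C'' : ℝ)
    (hD : DisAg = (1 / (2 * (Q : ℝ) ^ 2)) *
      ∑ i, ∑ j, ∑ n, (e i 0 n - e j 0 n) ^ 2)
    (hD' : DisAgNew = (1 / (2 * (Q : ℝ) ^ 2)) *
      ∑ i, ∑ j, ∑ n, (enew i 0 n - enew j 0 n) ^ 2)
    (hC'' : C'' = (2 / (Q : ℝ)) * ∑ i, ∑ k, Δ i 0 k * Δt i 0 k)
    (hC' : C' = (2 / (Q : ℝ) ^ 2) *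
      ∑ k, (∑ i, Δ i 0 k) * (∑ j, Δt j 0 k)) :
    DisAgNew - DisAg = μ * (C' - C'')
      + μ ^ 2 * ((1 / (2 * (Q : ℝ) ^ 2)) *
          ∑ i, ∑ j, ∑ n, ((Δ i * Xt) 0 n - (Δ j * Xt) 0 n) ^ 2) := by
  have hQR : (Q : ℝ) ≠ 0 := Nat.cast_ne_zero.mpr hQ.ne'
  have hen : ∀ i n, enew i 0 n = e i 0 n - μ * (Δ i * Xt) 0 n := by
    intro i n
    rw [henew, he]
    simp [Matrix.sub_mul, Matrix.smul_mul, Matrix.sub_apply, Matrix.smul_apply]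
    ring
  have key : ∀ i j, ∑ n, e i 0 n * (Δ j * Xt) 0 n = ∑ k, Δ j 0 k * Δt i 0 k := by
    intro i j
    simp only [hΔt, Matrix.mul_apply, Matrix.transpose_apply, Finset.mul_sum,
      Finset.sum_mul]
    rw [Finset.sum_comm]
    exact Finset.sum_congr rfl fun k _ => Finset.sum_congr rfl fun n _ => by ring
  have expand : ∀ i j, ∑ n, (enew i 0 n - enew j 0 n) ^ 2
      = ∑ n, (e i 0 n - e j 0 n) ^ 2
        - 2 * μ * ((∑ k, Δ i 0 k * Δt i 0 k) - (∑ k, Δ j 0 k * Δt i 0 k)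
            - (∑ k, Δ i 0 k * Δt j 0 k) + (∑ k, Δ j 0 k * Δt j 0 k))
        + μ ^ 2 * ∑ n, ((Δ i * Xt) 0 n - (Δ j * Xt) 0 n) ^ 2 := by
    intro i j
    rw [← key i i, ← key i j, ← key j i, ← key j j]
    have : ∀ n, (enew i 0 n - enew j 0 n) ^ 2
        = (e i 0 n - e j 0 n) ^ 2
          - 2 * μ * (e i 0 n * (Δ i * Xt) 0 n - e i 0 n * (Δ j * Xt) 0 n
              - e j 0 n * (Δ i * Xt) 0 n + e j 0 n * (Δ j * Xt) 0 n)
          + μ ^ 2 * ((Δ i * Xt) 0 n - (Δ j * Xt) 0 n) ^ 2 := by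
      intro n; rw [hen, hen]; ring
    rw [Finset.sum_congr rfl fun n _ => this n]
    simp only [Finset.sum_add_distrib, Finset.sum_sub_distrib]
    rw [← Finset.mul_sum, ← Finset.mul_sum]
    simp only [Finset.sum_add_distrib, Finset.sum_sub_distrib]
  have hprod : ∀ (F G : Fin Q → Fin d → ℝ),
      (∑ i, ∑ j, ∑ k, F i k * G j k) = ∑ k, (∑ i, F i k) * (∑ j, G j k) := by
    intro F G
    calc ∑ i, ∑ j, ∑ k, F i k * G j k
        = ∑ i, ∑ k, ∑ j, F i k * G j k :=
          Finset.sum_congr rfl fun i _ => Finset.sum_comm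
      _ = ∑ k, ∑ i, ∑ j, F i k * G j k := Finset.sum_comm
      _ = ∑ k, (∑ i, F i k) * (∑ j, G j k) :=
          Finset.sum_congr rfl fun k _ => (Finset.sum_mul_sum _ _ _ _).symm
  rw [hD, hD', hC', hC'']
  rw [Finset.sum_congr rfl fun i (_ : i ∈ Finset.univ) =>
    Finset.sum_congr rfl fun j (_ : j ∈ Finset.univ) => expand i j]
  simp only [Finset.sum_add_distrib, Finset.sum_sub_distrib, ← Finset.mul_sum]
  have h1 : ∑ (i : Fin Q), ∑ (_ : Fin Q), (∑ k, Δ i 0 k * Δt i 0 k)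
      = (Q : ℝ) * ∑ i, ∑ k, Δ i 0 k * Δt i 0 k := by
    simp [Finset.sum_const, Finset.card_univ, mul_comm, Finset.mul_sum]
  have h2 : ∑ (_ : Fin Q), ∑ (j : Fin Q), (∑ k, Δ j 0 k * Δt j 0 k)
      = (Q : ℝ) * ∑ i, ∑ k, Δ i 0 k * Δt i 0 k := by
    simp [Finset.sum_const, Finset.card_univ, mul_comm, Finset.mul_sum]
  have h3 : ∑ (i : Fin Q), ∑ (j : Fin Q), (∑ k, Δ j 0 k * Δt i 0 k)
      = ∑ k, (∑ i, Δ i 0 k) * (∑ j, Δt j 0 k) := by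
    have hc : ∑ (i : Fin Q), ∑ (j : Fin Q), (∑ k, Δ j 0 k * Δt i 0 k)
        = ∑ (i : Fin Q), ∑ (j : Fin Q), (∑ k, Δt i 0 k * Δ j 0 k) :=
      Finset.sum_congr rfl fun i _ => Finset.sum_congr rfl fun j _ =>
        Finset.sum_congr rfl fun k _ => mul_comm _ _
    rw [hc, hprod (fun i k => Δt i 0 k) (fun j k => Δ j 0 k)]
    exact Finset.sum_congr rfl fun k _ => mul_comm _ _
  have h4 : ∑ (i : Fin Q), ∑ (j : Fin Q), (∑ k, Δ i 0 k * Δt j 0 k)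
      = ∑ k, (∑ i, Δ i 0 k) * (∑ j, Δt j 0 k) :=
    hprod (fun i k => Δ i 0 k) (fun j k => Δt j 0 k)
  rw [h1, h2, h3, h4]
  field_simp
  ring
end

section
/- Under the assumptions: (1) all models share the same training data, (2) (1/Q)Σ_i W(i) = Σ_YX Σ_XX^{-1} with Σ_XX invertible, and (3) overfit occurs in every model, i.e. Δ(i,i)·Δ(i,t) < 0 for all i ∈ [Q], the first-order change in disagreement μ(C' - C'') is strictly positive, i.e. inter-model agreement decreases to first order in μ. -/
open Matrix

/-- Main result: if all models share the training data, the mean weight equals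
`Σ_YX Σ_XX⁻¹`, and overfit occurs in every model (`Δ(i,i)·Δ(i,t) < 0` for all
`i`), then `C' = 0`, `C'' < 0`, and the first-order change in disagreement
`μ(C' - C'')` is strictly positive: inter-model agreement decreases. -/
theorem overfit_implies_agreement_decrease (d M N : ℕ) (Q : ℕ) (hQ : 1 ≤ Q)
    (μ : ℝ) (hμ : 0 < μ)
    (X : Matrix (Fin d) (Fin M) ℝ) (y : Matrix (Fin 1) (Fin M) ℝ)
    (Xt : Matrix (Fin d) (Fin N) ℝ) (yt : Matrix (Fin 1) (Fin N) ℝ)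
    (Sxx : Matrix (Fin d) (Fin d) ℝ) (Syx : Matrix (Fin 1) (Fin d) ℝ)
    (hSxx : Sxx = X * Xᵀ) (hSyx : Syx = y * Xᵀ)
    (hinv : Invertible Sxx)
    (W : Fin Q → Matrix (Fin 1) (Fin d) ℝ)
    (Δ Δt : Fin Q → Matrix (Fin 1) (Fin d) ℝ)
    (hΔ : ∀ i, Δ i = (W i * X - y) * Xᵀ)
    (hΔt : ∀ i, Δt i = (W i * Xt - yt) * Xtᵀ)
    (hmean : (1 / (Q : ℝ)) • ∑ i, W i = Syx * Sxx⁻¹)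
    (hoverfit : ∀ i, (∑ k, Δ i 0 k * Δt i 0 k) < 0)
    (C' C'' : ℝ)
    (hC' : C' = (2 / (Q : ℝ) ^ 2) *
      ∑ k, (∑ i, Δ i 0 k) * (∑ j, Δt j 0 k))
    (hC'' : C'' = (2 / (Q : ℝ)) * ∑ i, ∑ k, Δ i 0 k * Δt i 0 k) :
    C' = 0 ∧ C'' < 0 ∧ 0 < μ * (C' - C'') := by
  have hQ0 : (0:ℝ) < (Q:ℝ) := by exact_mod_cast Nat.lt_of_lt_of_le Nat.zero_lt_one hQ
  have hQne : (Q:ℝ) ≠ 0 := ne_of_gt hQ0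
  have hWsum : ∑ i, W i = (Q:ℝ) • (Syx * Sxx⁻¹) := by
    have := congrArg (fun A => (Q:ℝ) • A) hmean
    simpa [smul_smul, mul_one_div, div_self hQne, mul_inv_cancel₀ hQne] using this
  have hΔsum : ∑ i, Δ i = 0 := by
    have h1 : ∑ i, Δ i = (∑ i, W i) * (X * Xᵀ) - (Q:ℝ) • (y * Xᵀ) := by
      simp only [hΔ, Matrix.sub_mul, Finset.sum_sub_distrib, ← Matrix.sum_mul,
        Finset.sum_const, Finset.card_univ, Fintype.card_fin, Matrix.mul_assoc,
        Nat.cast_smul_eq_nsmul]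
    rw [h1, hWsum, ← hSxx, ← hSyx]
    simp [Matrix.smul_mul, mul_assoc, Matrix.inv_mul_of_invertible]
  have hentry : ∀ k, ∑ i, Δ i 0 k = 0 := by
    intro k
    have := congrFun (congrFun hΔsum 0) k
    simpa [Matrix.sum_apply] using this
  have hC'0 : C' = 0 := by
    rw [hC']
    simp [hentry]
  have hC''neg : C'' < 0 := by
    rw [hC'']
    have hsum : ∑ i, ∑ k, Δ i 0 k * Δt i 0 k < 0 :=
      Finset.sum_neg (fun i _ => hoverfit i)
        (Finset.univ_nonempty_iff.mpr ⟨⟨0, hQ⟩⟩)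
    have h2 : (0:ℝ) < 2 / (Q:ℝ) := by positivity
    exact mul_neg_of_pos_of_neg h2 hsum
  refine ⟨hC'0, hC''neg, ?_⟩
  have : 0 < C' - C'' := by rw [hC'0]; linarith
  exact mul_pos hμ this
end

section
/- Simultaneous first-order decrease of training loss in all models and increase of disagreement: under the assumptions of the main result (shared training data, mean weight equals Σ_YX Σ_XX^{-1}, and Δ(i,i)·Δ(i,t) < 0 for all i with some Δ(i,i) ≠ 0), there exists μ₀ > 0 such that for all 0 < μ < μ₀, every model's training loss strictly decreases while DisAg strictly increases after the gradient step. -/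
open Matrix

lemma fub_aux {d M : ℕ} (E : Matrix (Fin 1) (Fin M) ℝ)
    (D : Matrix (Fin 1) (Fin d) ℝ) (X : Matrix (Fin d) (Fin M) ℝ) :
    ∑ m, E 0 m * (D * X) 0 m = ∑ k, D 0 k * (E * Xᵀ) 0 k := by
  simp only [Matrix.mul_apply, Matrix.transpose_apply, Finset.mul_sum]
  rw [Finset.sum_comm]
  exact Finset.sum_congr rfl fun k _ => Finset.sum_congr rfl fun m _ => by ring

set_option maxHeartbeats 1600000 in
/-- Under the assumptions of the main result (shared training data, mean
weight equal to `Σ_YX Σ_XX⁻¹`, overfit in every model with some nonzero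
training gradient), there is `μ₀ > 0` such that for all `0 < μ < μ₀`, every
model's training loss strictly decreases while the disagreement strictly
increases after the gradient step. -/
theorem loss_decreases_disagreement_increases (d M N : ℕ) (Q : ℕ) (hQ : 1 ≤ Q)
    (X : Matrix (Fin d) (Fin M) ℝ) (y : Matrix (Fin 1) (Fin M) ℝ)
    (Xt : Matrix (Fin d) (Fin N) ℝ) (yt : Matrix (Fin 1) (Fin N) ℝ)
    (Sxx : Matrix (Fin d) (Fin d) ℝ) (Syx : Matrix (Fin 1) (Fin d) ℝ)
    (hSxx : Sxx = X * Xᵀ) (hSyx : Syx = y * Xᵀ)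
    (hinv : Invertible Sxx)
    (W : Fin Q → Matrix (Fin 1) (Fin d) ℝ)
    (Δ Δt : Fin Q → Matrix (Fin 1) (Fin d) ℝ)
    (hΔ : ∀ i, Δ i = (W i * X - y) * Xᵀ)
    (hΔt : ∀ i, Δt i = (W i * Xt - yt) * Xtᵀ)
    (hmean : (1 / (Q : ℝ)) • ∑ i, W i = Syx * Sxx⁻¹)
    (hoverfit : ∀ i, (∑ k, Δ i 0 k * Δt i 0 k) < 0)
    (hnz : ∃ i, Δ i ≠ 0)
    (L : Matrix (Fin 1) (Fin d) ℝ → ℝ)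
    (hL : ∀ V, L V = (1 / 2) * ∑ m, ((V * X - y) 0 m) ^ 2)
    (DisAg : ℝ → ℝ)
    (hDisAg : ∀ μ, DisAg μ = (1 / (2 * (Q : ℝ) ^ 2)) *
      ∑ i, ∑ j, ∑ n,
        (((W i - μ • Δ i) * Xt - yt) 0 n
          - ((W j - μ • Δ j) * Xt - yt) 0 n) ^ 2) :
    ∃ μ₀ : ℝ, 0 < μ₀ ∧ ∀ μ : ℝ, 0 < μ → μ < μ₀ →
      (∀ i, L (W i - μ • Δ i) < L (W i)) ∧ DisAg 0 < DisAg μ := by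
  have hQ0 : (0:ℝ) < Q := by exact_mod_cast hQ
  have hQne : (Q:ℝ) ≠ 0 := ne_of_gt hQ0
  have hne : (Finset.univ : Finset (Fin Q)).Nonempty := ⟨⟨0, hQ⟩, Finset.mem_univ _⟩
  -- entry formulas
  have hentry : ∀ (i : Fin Q) (μ : ℝ) (m : Fin M),
      ((W i - μ • Δ i) * X - y) 0 m = (W i * X - y) 0 m - μ * ((Δ i * X) 0 m) := by
    intro i μ m
    simp [Matrix.sub_mul, Matrix.smul_mul, Matrix.sub_apply, Matrix.smul_apply, smul_eq_mul]
    ring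
  have hentryt : ∀ (i : Fin Q) (μ : ℝ) (n : Fin N),
      ((W i - μ • Δ i) * Xt - yt) 0 n = (W i * Xt - yt) 0 n - μ * ((Δ i * Xt) 0 n) := by
    intro i μ n
    simp [Matrix.sub_mul, Matrix.smul_mul, Matrix.sub_apply, Matrix.smul_apply, smul_eq_mul]
    ring
  -- loss expansion
  have hLdiff : ∀ (i : Fin Q) (μ : ℝ),
      L (W i - μ • Δ i) = L (W i) - μ * (∑ k, (Δ i 0 k)^2)
        + μ^2/2 * (∑ m, ((Δ i * X) 0 m)^2) := by
    intro i μ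
    have hef : ∑ m, (W i * X - y) 0 m * ((Δ i * X) 0 m) = ∑ k, (Δ i 0 k)^2 := by
      rw [fub_aux]
      refine Finset.sum_congr rfl fun k _ => ?_
      rw [← hΔ i]; ring
    rw [hL, hL]
    have expand : ∀ m : Fin M, (((W i - μ • Δ i) * X - y) 0 m)^2
        = ((W i * X - y) 0 m)^2
          - 2*μ*((W i * X - y) 0 m * ((Δ i * X) 0 m))
          + μ^2 * ((Δ i * X) 0 m)^2 := by
      intro m; rw [hentry]; ring
    simp_rw [expand]
    rw [Finset.sum_add_distrib, Finset.sum_sub_distrib, ← Finset.mul_sum, ← Finset.mul_sum, hef]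
    ring
  -- sum of gradients vanishes
  have hsum0 : ∑ i, Δ i = 0 := by
    have hW : (∑ i, W i) = (Q:ℝ) • (Syx * Sxx⁻¹) := by
      rw [← hmean, smul_smul]
      rw [mul_one_div, div_self hQne, one_smul]
    have hSS : Syx * Sxx⁻¹ * Sxx = Syx := by
      rw [Matrix.mul_assoc, Matrix.nonsing_inv_mul Sxx (Matrix.isUnit_det_of_invertible Sxx),
        Matrix.mul_one]
    simp_rw [hΔ, Matrix.sub_mul]
    rw [Finset.sum_sub_distrib, ← Matrix.sum_mul, ← Matrix.sum_mul, Finset.sum_const,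
      Finset.card_univ, Fintype.card_fin]
    have e1 : (∑ i, W i) * X * Xᵀ = (Q:ℝ) • Syx := by
      rw [hW, Matrix.smul_mul, Matrix.smul_mul, Matrix.mul_assoc (Syx * Sxx⁻¹) X Xᵀ,
        ← hSxx, hSS]
    rw [e1, ← hSyx, ← Nat.cast_smul_eq_nsmul ℝ Q Syx]
    simp
  have hg0 : ∀ n : Fin N, ∑ i, (Δ i * Xt) 0 n = 0 := by
    intro n
    have : ∑ i, (Δ i * Xt) = (∑ i, Δ i) * Xt := (Matrix.sum_mul _ _ _).symm
    calc ∑ i, (Δ i * Xt) 0 n = (∑ i, (Δ i * Xt)) 0 n := by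
          rw [Matrix.sum_apply]
      _ = 0 := by rw [this, hsum0, Matrix.zero_mul]; rfl
  -- test cross term
  have hT' : ∀ i, ∑ n, (W i * Xt - yt) 0 n * ((Δ i * Xt) 0 n)
      = ∑ k, Δ i 0 k * Δt i 0 k := by
    intro i
    rw [fub_aux]
    refine Finset.sum_congr rfl fun k _ => ?_
    rw [← hΔt i]
  have hTneg : (∑ i, ∑ k, Δ i 0 k * Δt i 0 k) < 0 := by
    have := Finset.sum_lt_sum_of_nonempty hne
      (f := fun i => ∑ k, Δ i 0 k * Δt i 0 k) (g := fun _ => (0:ℝ))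
      (fun i _ => hoverfit i)
    simpa using this
  have hcross : ∑ i, ∑ j, ∑ n,
      ((W i * Xt - yt) 0 n - (W j * Xt - yt) 0 n) * ((Δ i * Xt) 0 n - (Δ j * Xt) 0 n)
      = 2 * (Q:ℝ) * (∑ i, ∑ k, Δ i 0 k * Δt i 0 k) := by
    have expand3 : ∀ (i j : Fin Q) (n : Fin N),
        ((W i * Xt - yt) 0 n - (W j * Xt - yt) 0 n) * ((Δ i * Xt) 0 n - (Δ j * Xt) 0 n)
        = (W i * Xt - yt) 0 n * (Δ i * Xt) 0 n
          - (W i * Xt - yt) 0 n * (Δ j * Xt) 0 n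
          - (W j * Xt - yt) 0 n * (Δ i * Xt) 0 n
          + (W j * Xt - yt) 0 n * (Δ j * Xt) 0 n := fun i j n => by ring
    simp_rw [expand3, Finset.sum_add_distrib, Finset.sum_sub_distrib]
    have h1 : ∑ i : Fin Q, ∑ _j : Fin Q, ∑ n, (W i * Xt - yt) 0 n * (Δ i * Xt) 0 n
        = (Q:ℝ) * ∑ i, ∑ n, (W i * Xt - yt) 0 n * (Δ i * Xt) 0 n := by
      simp [Finset.sum_const, Finset.card_univ, Finset.mul_sum]
    have h2 : ∑ _i : Fin Q, ∑ j : Fin Q, ∑ n, (W j * Xt - yt) 0 n * (Δ j * Xt) 0 n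
        = (Q:ℝ) * ∑ j, ∑ n, (W j * Xt - yt) 0 n * (Δ j * Xt) 0 n := by
      simp [Finset.sum_const, Finset.card_univ, Finset.mul_sum]
    have h3 : ∑ i : Fin Q, ∑ j : Fin Q, ∑ n, (W i * Xt - yt) 0 n * (Δ j * Xt) 0 n = 0 := by
      refine Finset.sum_eq_zero fun i _ => ?_
      rw [Finset.sum_comm]
      refine Finset.sum_eq_zero fun n _ => ?_
      rw [← Finset.mul_sum, hg0, mul_zero]
    have h4 : ∑ i : Fin Q, ∑ j : Fin Q, ∑ n, (W j * Xt - yt) 0 n * (Δ i * Xt) 0 n = 0 := by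
      rw [Finset.sum_comm]
      refine Finset.sum_eq_zero fun j _ => ?_
      rw [Finset.sum_comm]
      refine Finset.sum_eq_zero fun n _ => ?_
      rw [← Finset.mul_sum, hg0, mul_zero]
    rw [h1, h2, h3, h4]
    have hT'' : ∑ i, ∑ n, (W i * Xt - yt) 0 n * ((Δ i * Xt) 0 n)
        = ∑ i, ∑ k, Δ i 0 k * Δt i 0 k := Finset.sum_congr rfl fun i _ => hT' i
    rw [hT'']
    ring
  -- DisAg expansion
  have hDexp : ∀ μ : ℝ, DisAg μ = DisAg 0
      + μ * ((-(2/(Q:ℝ))) * (∑ i, ∑ k, Δ i 0 k * Δt i 0 k))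
      + μ^2 * ((1/(2*(Q:ℝ)^2)) *
          ∑ i, ∑ j, ∑ n, ((Δ i * Xt) 0 n - (Δ j * Xt) 0 n)^2) := by
    intro μ
    rw [hDisAg μ, hDisAg 0]
    simp only [zero_smul, sub_zero]
    have expand2 : ∀ (i j : Fin Q) (n : Fin N),
        (((W i - μ • Δ i) * Xt - yt) 0 n - ((W j - μ • Δ j) * Xt - yt) 0 n)^2
        = ((W i * Xt - yt) 0 n - (W j * Xt - yt) 0 n)^2
          - 2*μ*(((W i * Xt - yt) 0 n - (W j * Xt - yt) 0 n)
              * ((Δ i * Xt) 0 n - (Δ j * Xt) 0 n))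
          + μ^2 * ((Δ i * Xt) 0 n - (Δ j * Xt) 0 n)^2 := by
      intro i j n; rw [hentryt i μ n, hentryt j μ n]; ring
    simp_rw [expand2, Finset.sum_add_distrib, Finset.sum_sub_distrib, ← Finset.mul_sum]
    rw [hcross]
    field_simp
    ring
  -- positivity of gradient norms
  have hP : ∀ i, 0 < ∑ k, (Δ i 0 k)^2 := by
    intro i
    by_contra h
    push_neg at h
    have h0 : ∑ k, (Δ i 0 k)^2 = 0 :=
      le_antisymm h (Finset.sum_nonneg fun k _ => sq_nonneg _)
    have hk := (Finset.sum_eq_zero_iff_of_nonneg (fun k _ => sq_nonneg (Δ i 0 k))).mp h0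
    have hz : ∑ k, Δ i 0 k * Δt i 0 k = 0 := by
      refine Finset.sum_eq_zero fun k hk' => ?_
      have h1 : Δ i 0 k = 0 := by
        have := hk k hk'
        exact pow_eq_zero_iff (two_ne_zero) |>.mp this
      rw [h1, zero_mul]
    exact absurd (hoverfit i) (by rw [hz]; exact lt_irrefl 0)
  -- choose μ₀
  refine ⟨Finset.univ.inf' hne
      (fun i => 2 * (∑ k, (Δ i 0 k)^2) / ((∑ m, ((Δ i * X) 0 m)^2) + 1)), ?_, ?_⟩
  · rw [Finset.lt_inf'_iff]
    intro i _
    have hPi := hP i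
    have hAi : (0:ℝ) ≤ ∑ m, ((Δ i * X) 0 m)^2 := Finset.sum_nonneg fun m _ => sq_nonneg _
    positivity
  · intro μ hμ0 hμ1
    constructor
    · intro i
      have hle : μ < 2 * (∑ k, (Δ i 0 k)^2) / ((∑ m, ((Δ i * X) 0 m)^2) + 1) :=
        lt_of_lt_of_le hμ1 (Finset.inf'_le _ (Finset.mem_univ i))
      have hAi : (0:ℝ) ≤ ∑ m, ((Δ i * X) 0 m)^2 := Finset.sum_nonneg fun m _ => sq_nonneg _
      have h2 : μ * ((∑ m, ((Δ i * X) 0 m)^2) + 1) < 2 * (∑ k, (Δ i 0 k)^2) :=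
        (lt_div_iff₀ (by positivity)).mp hle
      have key : ∀ (Lv P A : ℝ), 0 < P → 0 ≤ A → μ * (A + 1) < 2 * P →
          Lv - μ * P + μ^2/2 * A < Lv := by
        intro Lv P A hPp hAp h
        nlinarith [mul_lt_mul_of_pos_left h (half_pos hμ0)]
      rw [hLdiff i μ]
      exact key _ _ _ (hP i) hAi h2
    · rw [hDexp μ]
      have h2Q : (0:ℝ) < 2/(Q:ℝ) := by positivity
      have hC : 0 < (-(2/(Q:ℝ))) * (∑ i, ∑ k, Δ i 0 k * Δt i 0 k) :=
        mul_pos_of_neg_of_neg (neg_lt_zero.mpr h2Q) hTneg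
      have hDq : (0:ℝ) ≤ (1/(2*(Q:ℝ)^2)) *
          ∑ i, ∑ j, ∑ n, ((Δ i * Xt) 0 n - (Δ j * Xt) 0 n)^2 := by
        have : (0:ℝ) ≤ ∑ i, ∑ j, ∑ n, ((Δ i * Xt) 0 n - (Δ j * Xt) 0 n)^2 :=
          Finset.sum_nonneg fun i _ => Finset.sum_nonneg fun j _ =>
            Finset.sum_nonneg fun n _ => sq_nonneg _
        exact mul_nonneg (by positivity) this
      have key2 : ∀ (D0 C B : ℝ), 0 < C → 0 ≤ B → D0 < D0 + μ * C + μ^2 * B := by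
        intro D0 C B hCp hBp
        nlinarith [mul_pos hμ0 hCp, mul_nonneg (mul_nonneg hμ0.le hμ0.le) hBp]
      exact key2 _ _ _ hC hDq
end
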